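/- arXiv:0806.1173 — 6 statements merged into one kernel-verified Lean document; each statement's English description precedes it below -/
import Mathlib

section
/- For every nonnegative integers x and y, the product of central binomial probabilities satisfies d(y)·d(x) ≤ d(x+y), where d(x) = 2^(-2x)·C(2x,x). -/
noncomputable def centralBinomProb (x : ℕ) : ℝ := (Nat.choose (2 * x) x : ℝ) / 4 ^ x

/-- One term of Vandermonde's identity. -/
theorem Nat.choose_mul_choose_le_add_choose (m n i j : ℕ) :
    m.choose i * n.choose j ≤ (m + n).choose (i + j) := by
  rw [Nat.add_choose_eq]
  exact Finset.single_le_sum (f := fun p => m.choose p.1 * n.choose p.2)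
    (fun _ _ => Nat.zero_le _) (a := (i, j)) (Finset.HasAntidiagonal.mem_antidiagonal.mpr rfl)

theorem Nat.centralBinom_mul_le_centralBinom_add (x y : ℕ) :
    x.centralBinom * y.centralBinom ≤ (x + y).centralBinom := by
  simpa only [Nat.centralBinom_eq_two_mul_choose, mul_add] using
    Nat.choose_mul_choose_le_add_choose (2 * x) (2 * y) x y

theorem centralBinomProb_eq (x : ℕ) : centralBinomProb x = x.centralBinom / 4 ^ x := by
  rw [centralBinomProb, Nat.centralBinom_eq_two_mul_choose]

theorem central_binom_prob_supermultiplicative (x y : ℕ) :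
    centralBinomProb y * centralBinomProb x ≤ centralBinomProb (x + y) := by
  rw [mul_comm, centralBinomProb_eq, centralBinomProb_eq, centralBinomProb_eq, div_mul_div_comm,
    ← pow_add]
  gcongr
  exact_mod_cast Nat.centralBinom_mul_le_centralBinom_add x y
end

section
/- For every r > 0 and positive integer x, the sum over y with h(x) ≤ y ≤ x of C(y, x−y)·(4r)^y equals (γ(r)·γ₂(r)/(γ(r)+γ₂(r)))·(γ(r)^(−(x+1)) − (−γ₂(r))^(−(x+1))), where γ₂(r) = γ(r)+1 and h(x) is the smallest integer with 2h(x) ≥ x. -/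
/-!
The sum is the Fibonacci-type polynomial `F_x(t) = ∑_{i + j = x} C(i, j) tⁱ` at `t = 4r`: the
terms with `y < h(x)` vanish because then `C(y, x - y) = 0`. Pascal's rule gives
`F_{x+2} = t (F_{x+1} + F_x)`, so `F_x = (a^{x+1} - b^{x+1}) / (a - b)` for the roots `a, b` of
`z² = t (z + 1)`. Since `4r γ γ₂ = 1`, these roots are `γ⁻¹` and `-γ₂⁻¹`, and
`γ⁻¹ + γ₂⁻¹ = (γ + γ₂) / (γ γ₂)`.
-/

noncomputable def gam (r : ℝ) : ℝ := (Real.sqrt ((1 + r) / r) - 1) / 2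

noncomputable def gam2 (r : ℝ) : ℝ := gam r + 1

/-- `h x` is the smallest integer `y` with `2 * y ≥ x` (the upper half of `x`). -/
def upperHalf (x : ℕ) : ℕ := (x + 1) / 2

open Finset

section FibSum

variable {R : Type*} [CommRing R]

def fibSum (t : R) (n : ℕ) : R := ∑ p ∈ antidiagonal n, (p.1.choose p.2 : R) * t ^ p.1

theorem fibSum_add_two (t : R) (n : ℕ) :
    fibSum t (n + 2) = t * (fibSum t (n + 1) + fibSum t n) := by
  simp only [fibSum, Nat.antidiagonal_succ_succ', Nat.antidiagonal_succ', sum_cons, sum_map,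
    Function.Embedding.coe_prodMap, Prod.map_fst, Prod.map_snd, Function.Embedding.coeFn_mk,
    Function.Embedding.refl_apply, Nat.succ_eq_add_one, Nat.choose_succ_succ', Nat.cast_add,
    Nat.choose_zero_right, Nat.choose_zero_succ, Nat.cast_zero, Nat.cast_one, zero_mul, one_mul,
    zero_add, add_mul, sum_add_distrib, mul_add, mul_sum, pow_succ', mul_left_comm t]
  ring

theorem sub_mul_fibSum {t a b : R} (ha : a ^ 2 = t * (a + 1)) (hb : b ^ 2 = t * (b + 1)) :
    ∀ n, (a - b) * fibSum t n = a ^ (n + 1) - b ^ (n + 1)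
  | 0 => by simp [fibSum]
  | 1 => by
    have hfib_one : fibSum t 1 = t := by simp [fibSum, Nat.antidiagonal_succ]
    rw [hfib_one]
    linear_combination hb - ha
  | n + 2 => by
    rw [fibSum_add_two, mul_left_comm, mul_add, sub_mul_fibSum ha hb n,
      sub_mul_fibSum ha hb (n + 1)]
    linear_combination b ^ n * b * hb - a ^ n * a * ha

end FibSum

theorem sum_Icc_upperHalf_choose_mul_pow {R : Type*} [CommRing R] (t : R) (x : ℕ) :
    ∑ y ∈ Icc (upperHalf x) x, (y.choose (x - y) : R) * t ^ y = fibSum t x := by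
  rw [fibSum, Nat.sum_antidiagonal_eq_sum_range_succ_mk]
  refine sum_subset (fun y hy => mem_range.2 (Nat.lt_succ_of_le (mem_Icc.1 hy).2)) ?_
  intro y hyx hy
  rw [mem_range] at hyx
  rw [mem_Icc, upperHalf] at hy
  rw [Nat.choose_eq_zero_of_lt (by omega), Nat.cast_zero, zero_mul]

theorem inv_sq_eq_of_mul_mul_add_one {K : Type*} [Field K] {t g : K}
    (h : t * (g * (g + 1)) = 1) :
    g⁻¹ ^ 2 = t * (g⁻¹ + 1) ∧ (-(g + 1)⁻¹) ^ 2 = t * (-(g + 1)⁻¹ + 1) := by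
  have hg : g ≠ 0 := by rintro rfl; simp at h
  have hg1 : g + 1 ≠ 0 := by intro h'; simp [h'] at h
  constructor <;> field_simp <;> linear_combination -h

theorem gam_pos {r : ℝ} (hr : 0 < r) : 0 < gam r := by
  have : 1 < (1 + r) / r := by rw [lt_div_iff₀ hr]; linarith
  unfold gam
  linarith [(Real.lt_sqrt zero_le_one).2 (by simpa using this)]

theorem four_mul_mul_gam_mul_gam2 {r : ℝ} (hr : 0 < r) : 4 * r * (gam r * gam2 r) = 1 := by
  have hsq : r * Real.sqrt ((1 + r) / r) ^ 2 = 1 + r := by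
    rw [Real.sq_sqrt (by positivity)]; field_simp
  rw [gam2, gam]
  field_simp
  linear_combination 4 * hsq

theorem g_closed_form_general (r : ℝ) (hr : 0 < r) (x : ℕ) :
    ∑ y ∈ Finset.Icc (upperHalf x) x, (Nat.choose y (x - y) : ℝ) * (4 * r) ^ y
      = (gam r * gam2 r / (gam r + gam2 r)) *
        (gam r ^ (-(x + 1 : ℤ)) - (-gam2 r) ^ (-(x + 1 : ℤ))) := by
  have hg := gam_pos hr
  have hg2 : 0 < gam2 r := by rw [gam2]; linarith
  obtain ⟨ha, hb⟩ := inv_sq_eq_of_mul_mul_add_one (four_mul_mul_gam_mul_gam2 hr)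
  have hbinet := sub_mul_fibSum ha hb x
  have hzpow : ∀ z : ℝ, z ^ (-(x + 1 : ℤ)) = z⁻¹ ^ (x + 1) := fun z => by
    rw [zpow_neg, ← inv_zpow, ← Nat.cast_succ, zpow_natCast]
  rw [sum_Icc_upperHalf_choose_mul_pow, hzpow, hzpow, inv_neg, gam2, ← hbinet]
  field_simp
  ring

theorem g_closed_form (r : ℝ) (hr : 0 < r) (x : ℕ) (hx : 1 ≤ x) :
    ∑ y ∈ Finset.Icc (upperHalf x) x, (Nat.choose y (x - y) : ℝ) * (4 * r) ^ y
      = (gam r * gam2 r / (gam r + gam2 r)) *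
        (gam r ^ (-(x + 1 : ℤ)) - (-gam2 r) ^ (-(x + 1 : ℤ))) :=
  g_closed_form_general r hr x
end

section
/- Let μ be a nonzero finite measure on ℝ with finite exponential moments, and for each real a let μ_a be the probability measure proportional to e^{ax} μ(dx). Then for all a ≤ b, μ_b stochastically dominates μ_a, i.e., μ_a([x,∞)) ≤ μ_b([x,∞)) for every real x. -/
open MeasureTheory

/-- The exponentially tilted measure `ν_a(dx) = e^{a x} μ(dx)`. -/
noncomputable def tilt (μ : Measure ℝ) (a : ℝ) : Measure ℝ :=
  μ.withDensity (fun x => ENNReal.ofReal (Real.exp (a * x)))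

/-- The normalized exponentially tilted probability measure `μ_a = ν_a / |ν_a|`. -/
noncomputable def tiltProb (μ : Measure ℝ) (a : ℝ) : Measure ℝ :=
  (tilt μ a Set.univ)⁻¹ • tilt μ a

/-!
Tilting by `b` is tilting `μ_a` by the nondecreasing density `y ↦ e^{(b - a) y}`. Since this
density is at least `e^{(b - a) x}` on `[x, ∞)` and at most that value on its complement,
`ν_a([x, ∞)) ν_b((-∞, x)) ≤ ν_b([x, ∞)) ν_a((-∞, x))`; adding `ν_a([x, ∞)) ν_b([x, ∞))` to both
sides and dividing by the total masses gives `μ_a([x, ∞)) ≤ μ_b([x, ∞))`.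
-/

open Set
open scoped ENNReal

section

variable {α : Type*} [MeasurableSpace α]

lemma measure_mul_withDensity_compl_le {ν : Measure α} {f : α → ℝ≥0∞} {s : Set α} {t : ℝ≥0∞}
    (hs : MeasurableSet s) (hf_ge : ∀ y ∈ s, t ≤ f y) (hf_le : ∀ y ∈ sᶜ, f y ≤ t) :
    ν s * ν.withDensity f sᶜ ≤ ν.withDensity f s * ν sᶜ := by
  have below : ν.withDensity f sᶜ ≤ t * ν sᶜ := by
    rw [withDensity_apply _ hs.compl, ← setLIntegral_const]
    exact setLIntegral_mono measurable_const hf_le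
  have above : t * ν s ≤ ν.withDensity f s := by
    rw [withDensity_apply _ hs, ← setLIntegral_const]
    exact setLIntegral_mono' hs hf_ge
  calc ν s * ν.withDensity f sᶜ ≤ ν s * (t * ν sᶜ) := by gcongr
    _ = t * ν s * ν sᶜ := by ring
    _ ≤ ν.withDensity f s * ν sᶜ := by gcongr

lemma inv_smul_apply_le_of_mul_compl_le {ν ν' : Measure α} {s : Set α} (hs : MeasurableSet s)
    (h0 : ν' univ ≠ 0) (htop : ν' univ ≠ ∞) (h : ν s * ν' sᶜ ≤ ν' s * ν sᶜ) :
    ((ν univ)⁻¹ • ν) s ≤ ((ν' univ)⁻¹ • ν') s := by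
  have cross : ν s * ν' univ ≤ ν' s * ν univ := by
    rw [← measure_add_measure_compl hs (μ := ν), ← measure_add_measure_compl hs (μ := ν'),
      mul_add, mul_add, mul_comm (ν s) (ν' s)]
    gcongr
  simp only [Measure.smul_apply, smul_eq_mul]
  calc (ν univ)⁻¹ * ν s = (ν univ)⁻¹ * (ν s * ν' univ) * (ν' univ)⁻¹ := by
        rw [mul_assoc, mul_assoc, ENNReal.mul_inv_cancel h0 htop, mul_one]
    _ ≤ (ν univ)⁻¹ * (ν' s * ν univ) * (ν' univ)⁻¹ := by gcongr
    _ = ((ν univ)⁻¹ * ν univ) * (ν' s * (ν' univ)⁻¹) := by ring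
    _ ≤ (ν' univ)⁻¹ * ν' s := by
        rw [mul_comm (ν' s)]
        exact mul_le_of_le_one_left' (ENNReal.inv_mul_le_one _)

end

lemma measurable_ofReal_exp_mul (a : ℝ) :
    Measurable fun x : ℝ => ENNReal.ofReal (Real.exp (a * x)) := by
  fun_prop

lemma monotone_ofReal_exp_mul {c : ℝ} (hc : 0 ≤ c) :
    Monotone fun x : ℝ => ENNReal.ofReal (Real.exp (c * x)) :=
  fun _ _ hxy => ENNReal.ofReal_le_ofReal (Real.exp_le_exp.2 (mul_le_mul_of_nonneg_left hxy hc))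

lemma tilt_tilt (μ : Measure ℝ) (a c : ℝ) : tilt (tilt μ a) c = tilt μ (a + c) := by
  rw [tilt, tilt, tilt,
    ← withDensity_mul _ (measurable_ofReal_exp_mul a) (measurable_ofReal_exp_mul c)]
  congr 1 with x
  rw [Pi.mul_apply, ← ENNReal.ofReal_mul (Real.exp_pos _).le, ← Real.exp_add, add_mul]

lemma tilt_univ_ne_zero {μ : Measure ℝ} (hμ : μ ≠ 0) (a : ℝ) : tilt μ a univ ≠ 0 := by
  rw [Ne, Measure.measure_univ_eq_zero, tilt,
    withDensity_eq_zero_iff (measurable_ofReal_exp_mul a).aemeasurable]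
  intro h
  have := ae_neBot.2 hμ
  obtain ⟨x, hx⟩ := h.exists
  exact (ENNReal.ofReal_pos.2 (Real.exp_pos (a * x))).ne' hx

lemma tilt_univ_ne_top {μ : Measure ℝ} {a : ℝ}
    (hexp : Integrable (fun x => Real.exp (a * x)) μ) : tilt μ a univ ≠ ∞ :=
  (isFiniteMeasure_withDensity_ofReal hexp.2).measure_univ_lt_top.ne

theorem tilted_family_stochastically_increasing_general
    (μ : Measure ℝ) (hμ : μ ≠ 0)
    (hexp : ∀ a : ℝ, Integrable (fun x => Real.exp (a * x)) μ)
    (a b : ℝ) (hab : a ≤ b) (x : ℝ) :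
    tiltProb μ a (Set.Ici x) ≤ tiltProb μ b (Set.Ici x) := by
  have hba : tilt (tilt μ a) (b - a) = tilt μ b := by rw [tilt_tilt, add_sub_cancel]
  have hmono := monotone_ofReal_exp_mul (sub_nonneg.2 hab)
  refine inv_smul_apply_le_of_mul_compl_le measurableSet_Ici (tilt_univ_ne_zero hμ b)
    (tilt_univ_ne_top (hexp b)) ?_
  rw [← hba]
  exact measure_mul_withDensity_compl_le measurableSet_Ici (fun y hy => hmono hy)
    (fun y hy => hmono (le_of_not_ge hy))

theorem tilted_family_stochastically_increasing
    (μ : Measure ℝ) [IsFiniteMeasure μ] (hμ : μ ≠ 0)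
    (hexp : ∀ a : ℝ, Integrable (fun x => Real.exp (a * x)) μ)
    (a b : ℝ) (hab : a ≤ b) (x : ℝ) :
    tiltProb μ a (Set.Ici x) ≤ tiltProb μ b (Set.Ici x) :=
  tilted_family_stochastically_increasing_general μ hμ hexp a b hab x
end

section
/- For every positive real r and positive integer x, the measure μ(r, x+1) stochastically dominates μ(r, x), where μ(r,x) is the normalized measure with weights proportional to C(2y,y)·C(y, x−y)·r^y on integers y with h(x) ≤ y ≤ x. -/
/-- Weight of `ν(r,x)` at `y`. -/
noncomputable def w (r : ℝ) (x y : ℕ) : ℝ :=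
  (Nat.choose (2 * y) y : ℝ) * (Nat.choose y (x - y) : ℝ) * r ^ y

/-!
Stochastic domination follows from the monotone likelihood ratio property: the ratio of the
weights of `ν(r, x + 1)` and `ν(r, x)` at `y` is `C(y, x + 1 - y) / C(y, x - y) = (2y - x) / (x + 1 - y)`,
which increases with `y`. Pairing each term of a tail with each term below it then compares the
tails of the two normalized measures.
-/

open Finset

theorem tail_mul_sum_le_of_likelihood_ratio {α R : Type*} [LinearOrder α] [CommRing R]
    [LinearOrder R] [IsStrictOrderedRing R] (s : Finset α) (a b : α → R)
    (h : ∀ y ∈ s, ∀ u ∈ s, u < y → a y * b u ≤ b y * a u) (z : α) :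
    (∑ y ∈ s with z ≤ y, a y) * ∑ u ∈ s, b u ≤ (∑ y ∈ s with z ≤ y, b y) * ∑ u ∈ s, a u := by
  rw [← sum_filter_add_sum_filter_not s (z ≤ ·) a, ← sum_filter_add_sum_filter_not s (z ≤ ·) b]
  have cross : (∑ y ∈ s with z ≤ y, a y) * (∑ u ∈ s with ¬z ≤ u, b u) ≤
      (∑ y ∈ s with z ≤ y, b y) * (∑ u ∈ s with ¬z ≤ u, a u) := by
    simp_rw [sum_mul_sum]
    refine sum_le_sum fun y hy => sum_le_sum fun u hu => ?_
    rw [mem_filter] at hy hu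
    exact h y hy.1 u hu.1 (lt_of_lt_of_le (not_le.mp hu.2) hy.2)
  linarith [mul_comm (∑ y ∈ s with z ≤ y, a y) (∑ y ∈ s with z ≤ y, b y)]

theorem choose_sub_mul_choose_succ_sub_le {x u y : ℕ} (huy : u < y) (hy : y ≤ x) :
    y.choose (x - y) * u.choose (x + 1 - u) ≤ y.choose (x + 1 - y) * u.choose (x - u) := by
  rcases lt_or_ge (2 * u) (x + 1) with hu | hu
  · rw [Nat.choose_eq_zero_of_lt (by omega : u < x + 1 - u), mul_zero]
    exact Nat.zero_le _
  have step_y := Nat.choose_succ_right_eq y (x - y)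
  have step_u := Nat.choose_succ_right_eq u (x - u)
  rw [show x + 1 - y = x - y + 1 by omega, show x + 1 - u = x - u + 1 by omega]
  refine Nat.le_of_mul_le_mul_right (c := (x - y + 1) * (x - u + 1)) ?_ (by positivity)
  -- `(2u - x) / (x + 1 - u) ≤ (2y - x) / (x + 1 - y)`, cleared of denominators
  have ratio : (u - (x - u)) * (x - y + 1) ≤ (y - (x - y)) * (x - u + 1) :=
    Nat.mul_le_mul (by omega) (by omega)
  calc y.choose (x - y) * u.choose (x - u + 1) * ((x - y + 1) * (x - u + 1))
      = y.choose (x - y) * (u.choose (x - u + 1) * (x - u + 1)) * (x - y + 1) := by ring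
    _ = y.choose (x - y) * u.choose (x - u) * ((u - (x - u)) * (x - y + 1)) := by
        rw [step_u]; ring
    _ ≤ y.choose (x - y) * u.choose (x - u) * ((y - (x - y)) * (x - u + 1)) :=
        Nat.mul_le_mul_left _ ratio
    _ = y.choose (x - y) * (y - (x - y)) * u.choose (x - u) * (x - u + 1) := by ring
    _ = y.choose (x - y + 1) * u.choose (x - u) * ((x - y + 1) * (x - u + 1)) := by
        rw [← step_y]; ring

/-- The mass of `ν(r, x)` at `y`. The guard matters: for `y > x` the truncated subtraction
makes `w r x y = C(2y, y) r ^ y`. -/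
noncomputable def nu (r : ℝ) (x y : ℕ) : ℝ :=
  if y ≤ x then w r x y else 0

theorem w_nonneg {r : ℝ} (hr : 0 ≤ r) (x y : ℕ) : 0 ≤ w r x y := by
  unfold w; positivity

theorem nu_nonneg {r : ℝ} (hr : 0 ≤ r) (x y : ℕ) : 0 ≤ nu r x y := by
  unfold nu; split_ifs
  exacts [w_nonneg hr x y, le_rfl]

theorem w_eq_zero_of_lt_upperHalf (r : ℝ) {x y : ℕ} (hy : y < upperHalf x) : w r x y = 0 := by
  rw [w, Nat.choose_eq_zero_of_lt (by unfold upperHalf at hy; omega : y < x - y)]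
  simp

theorem sum_w_pos {r : ℝ} (hr : 0 < r) (x : ℕ) : 0 < ∑ y ∈ Icc (upperHalf x) x, w r x y := by
  refine sum_pos' (fun y _ => w_nonneg hr.le x y) ⟨x, mem_Icc.mpr ⟨by unfold upperHalf; omega, le_rfl⟩, ?_⟩
  rw [w, Nat.sub_self, Nat.choose_zero_right]
  have := Nat.choose_pos (Nat.le_mul_of_pos_left x two_pos)
  positivity

theorem sum_filter_w_eq_sum_filter_nu (r : ℝ) {x n : ℕ} (hn : x < n) (p : ℕ → Prop)
    [DecidablePred p] :
    ∑ y ∈ Icc (upperHalf x) x with p y, w r x y = ∑ y ∈ range n with p y, nu r x y := by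
  have hsub : Icc (upperHalf x) x ⊆ range n := fun y hy => by
    rw [mem_Icc] at hy; rw [mem_range]; omega
  rw [← sum_subset (filter_subset_filter p hsub)]
  · refine sum_congr rfl fun y hy => ?_
    rw [nu, if_pos (mem_Icc.mp (mem_filter.mp hy).1).2]
  · intro y hyn hy
    rw [mem_filter, mem_Icc] at hy
    rw [mem_filter] at hyn
    unfold nu
    split_ifs with hyx
    · exact w_eq_zero_of_lt_upperHalf r (not_le.mp fun h => hy ⟨⟨h, hyx⟩, hyn.2⟩)
    · rfl

theorem sum_w_eq_sum_nu (r : ℝ) {x n : ℕ} (hn : x < n) :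
    ∑ y ∈ Icc (upperHalf x) x, w r x y = ∑ y ∈ range n, nu r x y := by
  simpa using sum_filter_w_eq_sum_filter_nu r hn (fun _ => True)

theorem nu_mul_nu_succ_le {r : ℝ} (hr : 0 ≤ r) (x : ℕ) {u y : ℕ} (huy : u < y) :
    nu r x y * nu r (x + 1) u ≤ nu r (x + 1) y * nu r x u := by
  by_cases hy : y ≤ x
  · rw [nu, nu, nu, nu, if_pos hy, if_pos (by omega), if_pos (by omega), if_pos (by omega)]
    have hchoose : ((y.choose (x - y) * u.choose (x + 1 - u) : ℕ) : ℝ) ≤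
        (y.choose (x + 1 - y) * u.choose (x - u) : ℕ) :=
      Nat.cast_le.mpr (choose_sub_mul_choose_succ_sub_le huy hy)
    push_cast at hchoose
    have hfactor : 0 ≤ ((2 * y).choose y : ℝ) * ((2 * u).choose u : ℝ) * r ^ y * r ^ u := by
      positivity
    calc w r x y * w r (x + 1) u
        = ((2 * y).choose y * (2 * u).choose u * r ^ y * r ^ u) *
            (y.choose (x - y) * u.choose (x + 1 - u)) := by unfold w; ring
      _ ≤ ((2 * y).choose y * (2 * u).choose u * r ^ y * r ^ u) *
            (y.choose (x + 1 - y) * u.choose (x - u)) := mul_le_mul_of_nonneg_left hchoose hfactor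
      _ = w r (x + 1) y * w r x u := by unfold w; ring
  · rw [nu, if_neg hy, zero_mul]
    exact mul_nonneg (nu_nonneg hr _ _) (nu_nonneg hr _ _)

theorem mu_stochastically_increasing_in_x_general (r : ℝ) (hr : 0 < r) (x : ℕ)
    (z : ℕ) :
    (∑ y ∈ (Finset.Icc (upperHalf x) x).filter (fun y => z ≤ y), w r x y) /
        (∑ y ∈ Finset.Icc (upperHalf x) x, w r x y)
      ≤ (∑ y ∈ (Finset.Icc (upperHalf (x + 1)) (x + 1)).filter (fun y => z ≤ y), w r (x + 1) y) /
        (∑ y ∈ Finset.Icc (upperHalf (x + 1)) (x + 1), w r (x + 1) y) := by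
  rw [div_le_div_iff₀ (sum_w_pos hr x) (sum_w_pos hr (x + 1)),
    sum_filter_w_eq_sum_filter_nu r (n := x + 2) (by omega),
    sum_filter_w_eq_sum_filter_nu r (n := x + 2) (by omega),
    sum_w_eq_sum_nu r (n := x + 2) (by omega), sum_w_eq_sum_nu r (n := x + 2) (by omega)]
  exact tail_mul_sum_le_of_likelihood_ratio _ _ _
    (fun y _ u _ huy => nu_mul_nu_succ_le hr.le x huy) z

theorem mu_stochastically_increasing_in_x (r : ℝ) (hr : 0 < r) (x : ℕ) (hx : 1 ≤ x)
    (z : ℕ) :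
    (∑ y ∈ (Finset.Icc (upperHalf x) x).filter (fun y => z ≤ y), w r x y) /
        (∑ y ∈ Finset.Icc (upperHalf x) x, w r x y)
      ≤ (∑ y ∈ (Finset.Icc (upperHalf (x + 1)) (x + 1)).filter (fun y => z ≤ y), w r (x + 1) y) /
        (∑ y ∈ Finset.Icc (upperHalf (x + 1)) (x + 1), w r (x + 1) y) :=
  mu_stochastically_increasing_in_x_general r hr x z
end

section
/- With ε_k, σ_y as above and ζ_x = inf{y ≥ 1 : σ_y ≥ x}, for all positive integers x and y: P(σ_y = x) = Σ_{z=0}^{x−1} (−u)^z · P(ζ_{x+1−z} = y+1). -/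
/-!
Since every step is 1 or 2, the walk passes level `x + 2` for the first time at step `y + 1`
exactly when `σ_y = x + 1`, or `σ_y = x` and the next step is a 2. As `σ_y` is independent of
that step, `P(ζ_{x+2} = y + 1) = P(σ_y = x + 1) + u P(σ_y = x)`. Together with `P(σ_y = 0) = 0`
this first-order linear recurrence in `x` unrolls to the alternating sum.
-/

open MeasureTheory ProbabilityTheory Finset

lemma eq_sum_range_neg_pow_mul_of_eq_sub_mul {R : Type*} [CommRing R] {a b : ℕ → R} (c : R)
    (h0 : a 0 = 0) (hsucc : ∀ n, a (n + 1) = b (n + 1) - c * a n) (n : ℕ) :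
    a n = ∑ z ∈ range n, (-c) ^ z * b (n - z) := by
  induction n with
  | zero => simpa using h0
  | succ n ih =>
    rw [hsucc, ih, sum_range_succ', mul_sum]
    simp only [pow_succ, Nat.sub_zero, pow_zero, one_mul, Nat.add_sub_add_right]
    rw [sub_eq_add_neg, add_comm, ← sum_neg_distrib]
    exact congrArg (· + b (n + 1)) (sum_congr rfl fun z _ => by ring)

lemma Monotone.sInf_setOf_pos_le_eq_succ_iff {s : ℕ → ℕ} (hs : Monotone s) {x y : ℕ}
    (hy : 1 ≤ y) : sInf {z | 1 ≤ z ∧ x ≤ s z} = y + 1 ↔ s y < x ∧ x ≤ s (y + 1) := by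
  have hclosed : ∀ k₁ k₂, k₁ ≤ k₂ → k₁ ∈ {z | 1 ≤ z ∧ x ≤ s z} → k₂ ∈ {z | 1 ≤ z ∧ x ≤ s z} :=
    fun k₁ k₂ hk ⟨h1, hx⟩ => ⟨h1.trans hk, hx.trans (hs hk)⟩
  rw [Nat.sInf_upward_closed_eq_succ_iff hclosed]
  simp only [Set.mem_ofPred_eq, le_add_iff_nonneg_left, zero_le, true_and, hy, not_le]
  exact and_comm

noncomputable def firstPassage (e : ℕ → ℕ) (x : ℕ) : ℕ :=
  sInf {z | 1 ≤ z ∧ x ≤ ∑ k ∈ range z, e k}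

lemma firstPassage_eq_succ_iff {e : ℕ → ℕ} (he : ∀ k, e k = 1 ∨ e k = 2) {x y : ℕ}
    (hy : 1 ≤ y) :
    firstPassage e (x + 2) = y + 1 ↔
      ∑ k ∈ range y, e k = x + 1 ∨ (∑ k ∈ range y, e k = x ∧ e y = 2) := by
  have hmono : Monotone fun z => ∑ k ∈ range z, e k :=
    fun _ _ h => sum_le_sum_of_subset (range_subset_range.2 h)
  rw [firstPassage, hmono.sInf_setOf_pos_le_eq_succ_iff hy, sum_range_succ]
  rcases he y with h | h <;> rw [h] <;> omega

section

variable {Ω : Type*} [MeasurableSpace Ω] {P : Measure Ω}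

lemma ae_eq_or_eq_of_measure_add_eq_one [IsProbabilityMeasure P] {X : Ω → ℕ}
    (hX : Measurable X) {a b : ℕ} (hab : a ≠ b)
    (h : P {ω | X ω = a} + P {ω | X ω = b} = 1) : ∀ᵐ ω ∂P, X ω = a ∨ X ω = b := by
  rw [ae_iff_prob_eq_one (by fun_prop), Set.ofPred_or,
    measure_union (s₂ := {ω | X ω = b}) _ (hX (measurableSet_singleton b)), h]
  exact Set.disjoint_left.2 fun ω (ha : X ω = a) (hb : X ω = b) => hab (ha.symm.trans hb)

lemma measure_firstPassage_eq_succ {ε : ℕ → Ω → ℕ} (hmeas : ∀ k, Measurable (ε k))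
    (hindep : iIndepFun ε P) (hstep : ∀ᵐ ω ∂P, ∀ k, ε k ω = 1 ∨ ε k ω = 2) (x : ℕ) {y : ℕ}
    (hy : 1 ≤ y) :
    P {ω | firstPassage (ε · ω) (x + 2) = y + 1}
      = P {ω | ∑ k ∈ range y, ε k ω = x + 1}
        + P {ω | ∑ k ∈ range y, ε k ω = x} * P {ω | ε y ω = 2} := by
  have hsum : Measurable fun ω => ∑ k ∈ range y, ε k ω := by fun_prop
  have hae : {ω | firstPassage (ε · ω) (x + 2) = y + 1} =ᵐ[P]
      ({ω | ∑ k ∈ range y, ε k ω = x + 1}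
        ∪ ({ω | ∑ k ∈ range y, ε k ω = x} ∩ {ω | ε y ω = 2}) : Set Ω) := by
    filter_upwards [hstep] with ω hω
    exact propext (firstPassage_eq_succ_iff hω hy)
  have hdisj : Disjoint {ω | ∑ k ∈ range y, ε k ω = x + 1}
      ({ω | ∑ k ∈ range y, ε k ω = x} ∩ {ω | ε y ω = 2}) :=
    Set.disjoint_left.2 fun ω h1 h2 => by simp_all
  have hindep_sum : IndepFun (fun ω => ∑ k ∈ range y, ε k ω) (ε y) P := by
    simpa only [Finset.sum_fn] using hindep.indepFun_sum_range_succ hmeas y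
  rw [measure_congr hae, measure_union hdisj
    ((hsum (measurableSet_singleton x)).inter (hmeas y (measurableSet_singleton 2)))]
  congr 1
  exact hindep_sum.measure_inter_preimage_eq_mul _ _ (measurableSet_singleton x)
    (measurableSet_singleton 2)
end

theorem hitting_time_renewal_identity_general
    (Ω : Type*) [MeasurableSpace Ω] (P : Measure Ω) [IsProbabilityMeasure P]
    (u : ℝ) (hu : u ∈ Set.Ioo (0 : ℝ) 1)
    (ε : ℕ → Ω → ℕ) (hmeas : ∀ k, Measurable (ε k))
    (hindep : iIndepFun ε P)
    (h1 : ∀ k, P {ω | ε k ω = 1} = ENNReal.ofReal (1 - u))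
    (h2 : ∀ k, P {ω | ε k ω = 2} = ENNReal.ofReal u)
    -- the random walk `σ_y = ε_1 + ⋯ + ε_y`
    (σ : ℕ → Ω → ℕ) (hσ : ∀ y ω, σ y ω = ∑ k ∈ Finset.range y, ε k ω)
    -- the first passage time `ζ_x = inf {y ≥ 1 : σ_y ≥ x}`
    (ζ : ℕ → Ω → ℕ) (hζ : ∀ x ω, ζ x ω = sInf {y | 1 ≤ y ∧ x ≤ σ y ω})
    (x y : ℕ) (hy : 1 ≤ y) :
    (P {ω | σ y ω = x}).toReal
      = ∑ z ∈ Finset.range x, (-u) ^ z * (P {ω | ζ (x + 1 - z) ω = y + 1}).toReal := by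
  obtain ⟨hu0, hu1⟩ := hu
  have hstep : ∀ᵐ ω ∂P, ∀ k, ε k ω = 1 ∨ ε k ω = 2 := ae_all_iff.2 fun k =>
    ae_eq_or_eq_of_measure_add_eq_one (hmeas k) (by norm_num) (by
      rw [h1, h2, ← ENNReal.ofReal_add (by linarith) hu0.le]; simp)
  have hzero : P {ω | ∑ k ∈ range y, ε k ω = 0} = 0 := by
    rw [measure_eq_zero_iff_ae_notMem]
    filter_upwards [hstep] with ω hω
    simp only [sum_eq_zero_iff, mem_range, not_forall]
    exact ⟨0, hy, by rcases hω 0 with h | h <;> omega⟩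
  have hζ' : ∀ x ω, ζ x ω = firstPassage (ε · ω) x := by simp [hζ, hσ, firstPassage]
  simp only [hζ', hσ]
  rw [eq_sum_range_neg_pow_mul_of_eq_sub_mul
    (a := fun n => (P {ω | ∑ k ∈ range y, ε k ω = n}).toReal)
    (b := fun n => (P {ω | firstPassage (ε · ω) (n + 1) = y + 1}).toReal) u]
  · exact sum_congr rfl fun z hz => by rw [Nat.sub_add_comm (mem_range.1 hz).le]
  · simp only [hzero, ENNReal.toReal_zero]
  · intro n
    simp only [add_assoc, Nat.reduceAdd]
    rw [measure_firstPassage_eq_succ hmeas hindep hstep n hy, h2, ENNReal.toReal_add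
      (measure_ne_top _ _) (ENNReal.mul_ne_top (measure_ne_top _ _) ENNReal.ofReal_ne_top),
      ENNReal.toReal_mul, ENNReal.toReal_ofReal hu0.le]
    ring

theorem hitting_time_renewal_identity
    (Ω : Type*) [MeasurableSpace Ω] (P : Measure Ω) [IsProbabilityMeasure P]
    (u : ℝ) (hu : u ∈ Set.Ioo (0 : ℝ) 1)
    (ε : ℕ → Ω → ℕ) (hmeas : ∀ k, Measurable (ε k))
    (hindep : iIndepFun ε P)
    (h1 : ∀ k, P {ω | ε k ω = 1} = ENNReal.ofReal (1 - u))
    (h2 : ∀ k, P {ω | ε k ω = 2} = ENNReal.ofReal u)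
    -- the random walk `σ_y = ε_1 + ⋯ + ε_y`
    (σ : ℕ → Ω → ℕ) (hσ : ∀ y ω, σ y ω = ∑ k ∈ Finset.range y, ε k ω)
    -- the first passage time `ζ_x = inf {y ≥ 1 : σ_y ≥ x}`
    (ζ : ℕ → Ω → ℕ) (hζ : ∀ x ω, ζ x ω = sInf {y | 1 ≤ y ∧ x ≤ σ y ω})
    (x y : ℕ) (hx : 1 ≤ x) (hy : 1 ≤ y) :
    (P {ω | σ y ω = x}).toReal
      = ∑ z ∈ Finset.range x, (-u) ^ z * (P {ω | ζ (x + 1 - z) ω = y + 1}).toReal :=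
  hitting_time_renewal_identity_general Ω P u hu ε hmeas hindep h1 h2 σ hσ ζ hζ x y hy
end

section
/- Let u ∈ (0,1) and let η_x have the distribution of the hitting time conditioned on hitting: P(η_x = y) = P(σ_y = x)/P(H_x). Then E(η_x) = ((x+1)/(1+u))·(1+(−u)^{x+2})/(1−(−u)^{x+1}) − (1+u²)/(1+u)² for every positive integer x. -/
/-!
Write `q y m = P(σ_y = m)`. Conditioning on the last step gives
`q (y+1) (m+2) = (1-u) q y (m+1) + u q y m`, so the column sums `A m = ∑_y q y m` and
`N m = ∑_y y q y m` satisfy `A (m+2) = (1-u) A (m+1) + u A m` and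
`N (m+2) = (1-u) N (m+1) + u N m + A (m+2)`. The characteristic roots are `1` and `-u`, and the
forcing term `A` resonates with the root `1`, which produces the factor `m + 1`. Since a.s. every
step is at least `1`, the walk visits `x` at most once and only at times `≤ x`, so
`P(H_x) = A x` for `x ≥ 1` and `E(η_x) = N x / A x`.
-/

open MeasureTheory ProbabilityTheory Finset

/-- The law `q y m = P(σ_y = m)` of the walk with steps `1` and `2`, which these fields
determine. -/
structure IsOneTwoWalkLaw (u : ℝ) (q : ℕ → ℕ → ℝ) : Prop where
  zero_zero : q 0 0 = 1
  zero_succ : ∀ m, q 0 (m + 1) = 0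
  one_one : q 1 1 = 1 - u
  eq_zero_of_lt : ∀ {y m}, m < y → q y m = 0
  succ_add_two : ∀ y m, q (y + 1) (m + 2) = (1 - u) * q y (m + 1) + u * q y m

def hitMass (q : ℕ → ℕ → ℝ) (m : ℕ) : ℝ := ∑ y ∈ range (m + 1), q y m

def hitMoment (q : ℕ → ℕ → ℝ) (m : ℕ) : ℝ := ∑ y ∈ range (m + 1), (y : ℝ) * q y m

namespace IsOneTwoWalkLaw

variable {u : ℝ} {q : ℕ → ℕ → ℝ}

lemma sum_mul_succ_add_two (hq : IsOneTwoWalkLaw u q) (g : ℕ → ℝ) (m : ℕ) :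
    ∑ y ∈ range (m + 3), g y * q y (m + 2) =
      (1 - u) * ∑ y ∈ range (m + 2), g (y + 1) * q y (m + 1) +
        u * ∑ y ∈ range (m + 1), g (y + 1) * q y m := by
  have hlast : ∑ y ∈ range (m + 1), g (y + 1) * q y m =
      ∑ y ∈ range (m + 2), g (y + 1) * q y m := by
    rw [sum_range_succ _ (m + 1), hq.eq_zero_of_lt (by omega : m < m + 1), mul_zero, add_zero]
  rw [sum_range_succ' _ (m + 2), hq.zero_succ, mul_zero, add_zero, hlast, mul_sum, mul_sum,
    ← sum_add_distrib]
  refine sum_congr rfl fun y _ => ?_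
  rw [hq.succ_add_two]
  ring

lemma hitMass_add_two (hq : IsOneTwoWalkLaw u q) (m : ℕ) :
    hitMass q (m + 2) = (1 - u) * hitMass q (m + 1) + u * hitMass q m := by
  simpa [hitMass] using hq.sum_mul_succ_add_two (fun _ => 1) m

lemma hitMoment_add_two (hq : IsOneTwoWalkLaw u q) (m : ℕ) :
    hitMoment q (m + 2) =
      (1 - u) * hitMoment q (m + 1) + u * hitMoment q m + hitMass q (m + 2) := by
  have h := hq.sum_mul_succ_add_two (fun y => (y : ℝ)) m
  simp only [Nat.cast_succ, add_one_mul, sum_add_distrib] at h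
  rw [hq.hitMass_add_two, hitMoment, hitMoment, hitMoment, h, hitMass, hitMass]
  ring

lemma mul_hitMass (hq : IsOneTwoWalkLaw u q) (m : ℕ) :
    (1 + u) * hitMass q m = 1 - (-u) ^ (m + 1) := by
  induction m using Nat.twoStepInduction with
  | zero => simp [hitMass, hq.zero_zero]
  | one =>
    rw [hitMass, sum_range_succ, sum_range_one, hq.zero_succ, hq.one_one]
    ring
  | more n ih₀ ih₁ =>
    rw [hq.hitMass_add_two]
    linear_combination (1 - u) * ih₁ + u * ih₀

lemma mul_hitMoment (hq : IsOneTwoWalkLaw u q) (m : ℕ) :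
    (1 + u) ^ 3 * hitMoment q m =
      (m + 1) * (1 + u) * (1 + (-u) ^ (m + 2)) - (1 + u ^ 2) * (1 - (-u) ^ (m + 1)) := by
  induction m using Nat.twoStepInduction with
  | zero =>
    rw [hitMoment, sum_range_one, Nat.cast_zero, zero_mul]
    ring
  | one =>
    rw [hitMoment, sum_range_succ, sum_range_one, hq.one_one, Nat.cast_zero, Nat.cast_one]
    ring
  | more n ih₀ ih₁ =>
    rw [hq.hitMoment_add_two]
    push_cast at ih₀ ih₁ ⊢
    linear_combination (1 - u) * ih₁ + u * ih₀ + (1 + u) ^ 2 * hq.mul_hitMass (n + 2)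

lemma hitMoment_div_hitMass (hq : IsOneTwoWalkLaw u q) (hu₀ : 0 ≤ u) (hu₁ : u < 1) (m : ℕ) :
    hitMoment q m / hitMass q m =
      ((m + 1 : ℝ) / (1 + u)) * (1 + (-u) ^ (m + 2)) / (1 - (-u) ^ (m + 1))
        - (1 + u ^ 2) / (1 + u) ^ 2 := by
  have hpow : (-u) ^ (m + 1) < 1 := by
    refine (le_abs_self _).trans_lt ?_
    rw [abs_pow, abs_neg, abs_of_nonneg hu₀]
    exact pow_lt_one₀ hu₀ hu₁ (by omega)
  have hmass : hitMass q m = (1 - (-u) ^ (m + 1)) / (1 + u) := by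
    rw [eq_div_iff (by linarith), mul_comm, hq.mul_hitMass]
  have hmoment : hitMoment q m = ((m + 1) * (1 + u) * (1 + (-u) ^ (m + 2))
      - (1 + u ^ 2) * (1 - (-u) ^ (m + 1))) / (1 + u) ^ 3 := by
    rw [eq_div_iff (by positivity), mul_comm, hq.mul_hitMoment]
  rw [hmass, hmoment]
  field_simp [(by linarith : 1 - (-u) ^ (m + 1) ≠ 0)]

lemma sum_Icc_eq_hitMass (hq : IsOneTwoWalkLaw u q) {m : ℕ} (hm : 1 ≤ m) :
    ∑ y ∈ Icc 1 m, q y m = hitMass q m := by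
  obtain ⟨n, rfl⟩ := Nat.exists_eq_add_of_le' hm
  rw [hitMass, Nat.range_succ_eq_Icc_zero, ← insert_Icc_add_one_left_eq_Icc (Nat.zero_le _),
    sum_insert (by simp), hq.zero_succ, zero_add, zero_add]

lemma tsum_mul_div (hq : IsOneTwoWalkLaw u q) (m : ℕ) (c : ℝ) :
    ∑' y : ℕ, (y : ℝ) * (q y m / c) = hitMoment q m / c := by
  rw [tsum_eq_sum (s := range (m + 1)) fun y hy => by
    rw [hq.eq_zero_of_lt (by simpa using hy), zero_div, mul_zero], hitMoment, sum_div]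
  simp only [mul_div_assoc]

end IsOneTwoWalkLaw

lemma le_sum_range_of_one_le {e : ℕ → ℕ} (he : ∀ k, 1 ≤ e k) (y : ℕ) :
    y ≤ ∑ k ∈ range y, e k := by
  simpa using card_nsmul_le_sum (range y) e 1 fun k _ => he k

lemma strictMono_sum_range_of_one_le {e : ℕ → ℕ} (he : ∀ k, 1 ≤ e k) :
    StrictMono fun y => ∑ k ∈ range y, e k :=
  strictMono_nat_of_lt_succ fun y => by simp only [sum_range_succ]; linarith [he y]

section OneTwoSteps

variable {Ω : Type*} [MeasurableSpace Ω] {P : Measure Ω}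

lemma ae_eq_one_or_eq_two [IsProbabilityMeasure P] {X : Ω → ℕ} (hX : Measurable X)
    (h : P {ω | X ω = 1} + P {ω | X ω = 2} = 1) : ∀ᵐ ω ∂P, X ω = 1 ∨ X ω = 2 := by
  have hX₁ : MeasurableSet {ω | X ω = 1} := hX (measurableSet_singleton 1)
  have hX₂ : MeasurableSet {ω | X ω = 2} := hX (measurableSet_singleton 2)
  refine (ae_iff_measure_eq (p := fun ω => X ω = 1 ∨ X ω = 2)
    (hX₁.union hX₂).nullMeasurableSet).2 ?_
  rw [Set.ofPred_or, measure_union (Set.disjoint_left.2 fun ω h₁ h₂ => by simp_all) hX₂, h,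
    measure_univ]

lemma measure_add_eq_add_two {X Y : Ω → ℕ} (hX : Measurable X) (hY : Measurable Y)
    (hXY : IndepFun X Y P) (hY₁₂ : ∀ᵐ ω ∂P, Y ω = 1 ∨ Y ω = 2) (m : ℕ) :
    P {ω | X ω + Y ω = m + 2} =
      P {ω | X ω = m + 1} * P {ω | Y ω = 1} + P {ω | X ω = m} * P {ω | Y ω = 2} := by
  have hsplit : {ω | X ω + Y ω = m + 2} =ᵐ[P]
      ({ω | X ω = m + 1} ∩ {ω | Y ω = 1} ∪ {ω | X ω = m} ∩ {ω | Y ω = 2} : Set Ω) := by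
    refine Filter.eventuallyEq_set.2 ?_
    filter_upwards [hY₁₂] with ω hω
    simp only [Set.mem_ofPred_eq, Set.mem_union, Set.mem_inter_iff]
    omega
  have hdisj : Disjoint ({ω | X ω = m + 1} ∩ {ω | Y ω = 1}) ({ω | X ω = m} ∩ {ω | Y ω = 2}) :=
    Set.disjoint_left.2 fun ω h₁ h₂ => by simp_all
  rw [measure_congr hsplit, measure_union hdisj
    ((hX (measurableSet_singleton m)).inter (hY (measurableSet_singleton 2)))]
  congr 1 <;> exact hXY.measure_inter_preimage_eq_mul _ _ (measurableSet_singleton _)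
    (measurableSet_singleton _)

variable {ε : ℕ → Ω → ℕ}

lemma measure_sum_range_eq_of_lt (hε : ∀ᵐ ω ∂P, ∀ k, 1 ≤ ε k ω) {y m : ℕ}
    (hmy : m < y) : P {ω | ∑ k ∈ range y, ε k ω = m} = 0 := by
  refine measure_mono_null (fun ω hω => ?_) (ae_iff.1 hε)
  intro hω₁
  have := le_sum_range_of_one_le hω₁ y
  simp only [Set.mem_ofPred_eq] at hω
  omega

lemma measure_hit_eq_sum (hmeas : ∀ k, Measurable (ε k))
    (hε : ∀ᵐ ω ∂P, ∀ k, 1 ≤ ε k ω) (x : ℕ) :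
    P {ω | ∃ z, 1 ≤ z ∧ ∑ k ∈ range z, ε k ω = x} =
      ∑ z ∈ Icc 1 x, P {ω | ∑ k ∈ range z, ε k ω = x} := by
  rw [← measure_biUnion_finset₀]
  · refine measure_congr (Filter.eventuallyEq_set.2 ?_)
    filter_upwards [hε] with ω hω
    simp only [Set.mem_ofPred_eq, Set.mem_iUnion, mem_Icc, exists_prop]
    refine ⟨fun ⟨z, hz, hzx⟩ => ⟨z, ⟨hz, ?_⟩, hzx⟩, fun ⟨z, hz, hzx⟩ => ⟨z, hz.1, hzx⟩⟩
    exact hzx ▸ le_sum_range_of_one_le hω z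
  · intro z _ z' _ hzz'
    refine measure_mono_null (fun ω hzz'ω => ?_) (ae_iff.1 hε)
    obtain ⟨hz, hz'⟩ := hzz'ω
    intro hω
    exact hzz' ((strictMono_sum_range_of_one_le hω).injective (hz.trans hz'.symm))
  · exact fun z _ => (measurableSet_eq_fun (Finset.measurable_sum _ fun k _ => hmeas k)
      measurable_const).nullMeasurableSet

lemma isOneTwoWalkLaw_measure_sum_range [IsProbabilityMeasure P] {u : ℝ} (hu₀ : 0 ≤ u)
    (hu₁ : u ≤ 1) (hmeas : ∀ k, Measurable (ε k)) (hindep : iIndepFun ε P)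
    (h₁ : ∀ k, P {ω | ε k ω = 1} = ENNReal.ofReal (1 - u))
    (h₂ : ∀ k, P {ω | ε k ω = 2} = ENNReal.ofReal u)
    (hε : ∀ᵐ ω ∂P, ∀ k, ε k ω = 1 ∨ ε k ω = 2) :
    IsOneTwoWalkLaw u fun y m => (P {ω | ∑ k ∈ range y, ε k ω = m}).toReal where
  zero_zero := by simp
  zero_succ m := by simp
  one_one := by simp [h₁ 0, hu₁]
  eq_zero_of_lt hmy := by
    have hε₁ : ∀ᵐ ω ∂P, ∀ k, 1 ≤ ε k ω := hε.mono fun ω h k => by have := h k; omega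
    simp [measure_sum_range_eq_of_lt hε₁ hmy]
  succ_add_two y m := by
    have hS : Measurable fun ω => ∑ k ∈ range y, ε k ω :=
      Finset.measurable_sum _ fun k _ => hmeas k
    have hSε : IndepFun (fun ω => ∑ k ∈ range y, ε k ω) (ε y) P := by
      simpa only [← Finset.sum_apply] using hindep.indepFun_sum_range_succ hmeas y
    simp only [sum_range_succ, measure_add_eq_add_two hS (hmeas y) hSε (hε.mono fun ω h => h y),
      h₁, h₂]
    rw [ENNReal.toReal_add (by finiteness) (by finiteness), ENNReal.toReal_mul,
      ENNReal.toReal_mul, ENNReal.toReal_ofReal hu₀, ENNReal.toReal_ofReal (sub_nonneg.2 hu₁)]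
    ring

end OneTwoSteps

theorem conditional_hitting_time_expectation
    (Ω : Type*) [MeasurableSpace Ω] (P : Measure Ω) [IsProbabilityMeasure P]
    (u : ℝ) (hu : u ∈ Set.Ioo (0 : ℝ) 1)
    (ε : ℕ → Ω → ℕ) (hmeas : ∀ k, Measurable (ε k))
    (hindep : iIndepFun ε P)
    (h1 : ∀ k, P {ω | ε k ω = 1} = ENNReal.ofReal (1 - u))
    (h2 : ∀ k, P {ω | ε k ω = 2} = ENNReal.ofReal u)
    (σ : ℕ → Ω → ℕ) (hσ : ∀ y ω, σ y ω = ∑ k ∈ Finset.range y, ε k ω)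
    (x : ℕ) (hx : 1 ≤ x) :
    -- `E(η_x) = Σ_y y · P(σ_y = x)/P(H_x)` where `H_x = {∃ z ≥ 1 : σ_z = x}`
    (∑' y : ℕ, (y : ℝ) *
        ((P {ω | σ y ω = x}).toReal / (P {ω | ∃ z, 1 ≤ z ∧ σ z ω = x}).toReal))
      = ((x + 1 : ℝ) / (1 + u)) * (1 + (-u) ^ (x + 2)) / (1 - (-u) ^ (x + 1))
        - (1 + u ^ 2) / (1 + u) ^ 2 := by
  obtain ⟨hu₀, hu₁⟩ := hu
  obtain rfl : σ = fun y ω => ∑ k ∈ range y, ε k ω := funext₂ hσ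
  have hε : ∀ᵐ ω ∂P, ∀ k, ε k ω = 1 ∨ ε k ω = 2 := ae_all_iff.2 fun k =>
    ae_eq_one_or_eq_two (hmeas k) (by rw [h1, h2, ← ENNReal.ofReal_add (by linarith) hu₀.le]; simp)
  have hq := isOneTwoWalkLaw_measure_sum_range hu₀.le hu₁.le hmeas hindep h1 h2 hε
  rw [measure_hit_eq_sum hmeas (hε.mono fun ω h k => by have := h k; omega),
    ENNReal.toReal_sum fun _ _ => measure_ne_top _ _,
    hq.sum_Icc_eq_hitMass hx, hq.tsum_mul_div, hq.hitMoment_div_hitMass hu₀.le hu₁]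
end
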